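/- arXiv:2403.00057 — 3 statements merged into one kernel-verified Lean document; each statement's English description precedes it below -/
import Mathlib

section
/- Let H((x₁,x₂),(y₁,y₂)) = x₁y₂ + x₂y₁ on ℤ². For all integers a, b, c, there exist vectors u, v, w ∈ ℤ² with H(u,v) = a, H(u,w) = b, and H(v,w) = c. -/
theorem stmt13 (a b c : ℤ) :
    ∃ u v w : ℤ × ℤ,
      u.1 * v.2 + u.2 * v.1 = a ∧
      u.1 * w.2 + u.2 * w.1 = b ∧
      v.1 * w.2 + v.2 * w.1 = c := by
  by_cases h : a = 0 ∧ b = 0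
  · exact ⟨(0, 0), (0, 1), (c, 0), by simp [h.1], by simp [h.2], by simp⟩
  · set g : ℤ := (Int.gcd a b : ℤ) with hg
    have hgne : g ≠ 0 := by
      simp only [hg, ne_eq, Int.natCast_eq_zero, Int.gcd_eq_zero_iff]
      exact h
    set a' : ℤ := a / g
    set b' : ℤ := b / g
    have hga : g ∣ a := Int.gcd_dvd_left a b
    have hgb : g ∣ b := Int.gcd_dvd_right a b
    have ha : g * a' = a := Int.mul_ediv_cancel' hga
    have hb : g * b' = b := Int.mul_ediv_cancel' hgb
    have hcop : Int.gcd a' b' = 1 := by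
      have hpos : 0 < Int.gcd a b :=
        Nat.pos_of_ne_zero (by simpa [hg, Int.natCast_eq_zero] using hgne)
      have := Int.gcd_div_gcd_div_gcd hpos
      simpa [a', b', hg] using this
    have bez : a' * Int.gcdA a' b' + b' * Int.gcdB a' b' = 1 := by
      have := Int.gcd_eq_gcd_ab a' b'
      rw [hcop] at this
      exact this.symm
    set r : ℤ := Int.gcdA a' b'
    set s : ℤ := Int.gcdB a' b'
    refine ⟨(g, 0), (s * c, a'), (r * c, b'), by simp [ha], by simp [hb], ?_⟩
    simp only
    linear_combination c * bez
end

section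
/- Let Q((x₁,x₂),(y₁,y₂)) = x₁y₁ − x₂y₂ on ℤ². Suppose γ ∈ ℤ² is nonzero, and α, β ∈ ℤ² satisfy Q(α,γ) = Q(β,γ) = 0 and Q(α,β) = ±1. Then α = β or α = −β, and Q(α,α) = ±1. -/
theorem stmt15 (α β γ : ℤ × ℤ) (hγ : γ ≠ 0)
    (hαγ : α.1 * γ.1 - α.2 * γ.2 = 0) (hβγ : β.1 * γ.1 - β.2 * γ.2 = 0)
    (hαβ : α.1 * β.1 - α.2 * β.2 = 1 ∨ α.1 * β.1 - α.2 * β.2 = -1) :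
    (α = β ∨ α = -β) ∧ (α.1 * α.1 - α.2 * α.2 = 1 ∨ α.1 * α.1 - α.2 * α.2 = -1) := by
  have h1 : (α.1 * β.2 - α.2 * β.1) * γ.1 = 0 := by linear_combination β.2 * hαγ - α.2 * hβγ
  have h2 : (α.1 * β.2 - α.2 * β.1) * γ.2 = 0 := by linear_combination β.1 * hαγ - α.1 * hβγ
  have hd : α.1 * β.2 - α.2 * β.1 = 0 := by
    by_contra hne
    apply hγ
    have hg1 : γ.1 = 0 := by
      rcases mul_eq_zero.mp h1 with h | h
      · exact absurd h hne
      · exact h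
    have hg2 : γ.2 = 0 := by
      rcases mul_eq_zero.mp h2 with h | h
      · exact absurd h hne
      · exact h
    exact Prod.ext hg1 hg2
  have key : (α.1 * α.1 - α.2 * α.2) * (β.1 * β.1 - β.2 * β.2) = 1 := by
    rcases hαβ with h | h
    · nlinarith [h, hd]
    · nlinarith [h, hd]
  rcases Int.mul_eq_one_iff_eq_one_or_neg_one.mp key with ⟨ha, hb⟩ | ⟨ha, hb⟩
  · refine ⟨?_, Or.inl ha⟩
    rcases hαβ with h | h
    · left
      exact Prod.ext (by linear_combination β.1 * h - β.2 * hd - α.1 * hb)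
        (by linear_combination β.2 * h - β.1 * hd - α.2 * hb)
    · right
      exact Prod.ext (by show α.1 = -β.1; linear_combination β.1 * h - β.2 * hd - α.1 * hb)
        (by show α.2 = -β.2; linear_combination β.2 * h - β.1 * hd - α.2 * hb)
  · refine ⟨?_, Or.inr ha⟩
    rcases hαβ with h | h
    · right
      exact Prod.ext (by show α.1 = -β.1; linear_combination α.1 * hb + β.2 * hd - β.1 * h)
        (by show α.2 = -β.2; linear_combination α.2 * hb + β.1 * hd - β.2 * h)
    · left
      exact Prod.ext (by linear_combination α.1 * hb + β.2 * hd - β.1 * h)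
        (by linear_combination α.2 * hb + β.1 * hd - β.2 * h)
end

section
/- For each prime power m and integer d, define the rational number f_m(d) = d²/2 − 1 if m is even, and f_m(d) = (d²/2)·(m²−1)/m² − 1 if m is odd. Then for every integer d with |d| ≥ 2, there exists a prime power m dividing d such that | |f_m(d)| − 14 | > 1. -/
noncomputable def f (m : ℕ) (d : ℤ) : ℚ :=
  if Even m then (d : ℚ) ^ 2 / 2 - 1
  else ((d : ℚ) ^ 2 / 2) * (((m : ℚ) ^ 2 - 1) / (m : ℚ) ^ 2) - 1

theorem stmt16 (d : ℤ) (hd : 2 ≤ |d|) :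
    ∃ m : ℕ, IsPrimePow m ∧ (m : ℤ) ∣ d ∧ abs (|f m d| - 14) > 1 := by
  by_cases h2 : (2:ℤ) ∣ d
  · obtain ⟨c, rfl⟩ := h2
    have hc : c ≠ 0 := by rintro rfl; simp at hd
    have hc1 : 1 ≤ c ^ 2 := by rcases hc.lt_or_gt with h | h <;> nlinarith
    refine ⟨2, Nat.prime_two.isPrimePow, ⟨c, by push_cast; ring⟩, ?_⟩
    have hf : f 2 (2 * c) = ((2 * c ^ 2 - 1 : ℤ) : ℚ) := by
      simp only [f, if_pos (even_two)]
      push_cast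
      ring
    have hint : |(|2 * c ^ 2 - 1|) - 14| > (1 : ℤ) := by
      have habs : |2 * c ^ 2 - 1| = 2 * c ^ 2 - 1 := abs_of_nonneg (by linarith)
      rw [habs]
      rcases le_or_gt |c| 2 with h | h
      · have h4 : c ^ 2 ≤ 4 := by nlinarith [sq_abs c, abs_nonneg c]
        rw [abs_of_nonpos (show 2 * c ^ 2 - 1 - 14 ≤ 0 by linarith)]; linarith
      · have h9 : 9 ≤ c ^ 2 := by nlinarith [sq_abs c]
        rw [abs_of_nonneg (show (0:ℤ) ≤ 2 * c ^ 2 - 1 - 14 by linarith)]; linarith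
    rw [hf]
    exact_mod_cast hint
  · have hn2 : 2 ≤ d.natAbs := by
      rw [Int.abs_eq_natAbs] at hd; exact_mod_cast hd
    have hp := Nat.minFac_prime (show d.natAbs ≠ 1 by omega)
    set p := d.natAbs.minFac with hpdef
    have hpd : (p : ℤ) ∣ d := by
      exact dvd_trans (Int.natCast_dvd_natCast.mpr (Nat.minFac_dvd _)) (Int.natAbs_dvd.mpr dvd_rfl)
    have hp2 : p ≠ 2 := by
      rintro h; rw [h] at hpd; exact h2 (by exact_mod_cast hpd)
    have hp3 : 3 ≤ p := by have := hp.two_le; omega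
    have hnotev : ¬ Even p := fun hev => hp2 (hp.even_iff.mp hev)
    obtain ⟨e, he⟩ := hpd
    have he0 : e ≠ 0 := by rintro rfl; simp [he] at hd
    have he2 : e ≠ 2 ∧ e ≠ -2 := by
      constructor <;> rintro rfl
      · exact h2 ⟨(p : ℤ), by rw [he]; ring⟩
      · exact h2 ⟨-(p : ℤ), by rw [he]; ring⟩
    have hteven : (2 : ℤ) ∣ (p : ℤ) ^ 2 - 1 := by
      obtain ⟨k, hk⟩ := hp.odd_of_ne_two hp2
      refine ⟨2 * k ^ 2 + 2 * k, ?_⟩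
      have : (p : ℤ) = 2 * k + 1 := by exact_mod_cast hk
      rw [this]; ring
    obtain ⟨t, ht⟩ := hteven
    have hP3 : (3 : ℤ) ≤ (p : ℤ) := by exact_mod_cast hp3
    have ht4 : 4 ≤ t := by nlinarith
    refine ⟨p, hp.isPrimePow, ⟨e, he⟩, ?_⟩
    have hp0 : (p : ℚ) ≠ 0 := by positivity
    have hf : f p d = ((e ^ 2 * t - 1 : ℤ) : ℚ) := by
      simp only [f, if_neg hnotev]
      have hd2 : (d : ℚ) = (p : ℚ) * (e : ℚ) := by exact_mod_cast he
      have ht' : (p : ℚ) ^ 2 - 1 = 2 * (t : ℚ) := by exact_mod_cast ht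
      rw [hd2]
      field_simp
      push_cast
      nlinarith [ht', sq_nonneg ((p:ℚ))]
    have hE : e ^ 2 = 1 ∨ 9 ≤ e ^ 2 := by
      rcases le_or_gt (e ^ 2) 8 with h | h
      · left
        have hb1 : -2 ≤ e := by nlinarith
        have hb2 : e ≤ 2 := by nlinarith
        interval_cases e
        · exact absurd rfl he2.2
        · norm_num
        · exact absurd rfl he0
        · norm_num
        · exact absurd rfl he2.1
      · right; nlinarith
    have hint : |(|e ^ 2 * t - 1|) - 14| > (1 : ℤ) := by
      rcases hE with h1 | h9
      · rw [h1, one_mul, abs_of_nonneg (show (0:ℤ) ≤ t - 1 by linarith)]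
        rcases le_or_gt ((p : ℤ)) 5 with h | h
        · have h12 : t ≤ 12 := by nlinarith
          rw [abs_of_nonpos (show t - 1 - 14 ≤ 0 by linarith)]; linarith
        · have h6 : (6 : ℤ) ≤ (p : ℤ) := by linarith
          have h35 : 35 ≤ 2 * t := by nlinarith
          have h18 : 18 ≤ t := by omega
          rw [abs_of_nonneg (show (0:ℤ) ≤ t - 1 - 14 by linarith)]; linarith
      · have h36 : 36 ≤ e ^ 2 * t := by nlinarith
        rw [abs_of_nonneg (show (0:ℤ) ≤ e ^ 2 * t - 1 by linarith),
          abs_of_nonneg (show (0:ℤ) ≤ e ^ 2 * t - 1 - 14 by linarith)]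
        linarith
    rw [hf]
    exact_mod_cast hint
end
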